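/- For every positive integer k and every ν > 0, (1/V_{1,k})·(2πν)^{−k/2}·∫_{B_k} exp(−‖x‖²/(2ν)) dx = (k/(2π^{k/2}))·∫₀^{1/(2ν)} t^{k/2−1} e^{−t} dt, where V_{1,k} = π^{k/2}/Γ(k/2+1) is the volume of the unit ball B_k ⊆ ℝ^k. Consequently, for fixed k this quantity is strictly decreasing in ν: if 0 < ν_R < ν_P then f_k(ν_R) > f_k(ν_P), where f_k(ν) denotes the left-hand side. -/

import Mathlib

/-!
In polar coordinates the Gaussian weight integrates over the unit ball of `ℝ^k` to
`k · V_{1,k} · ∫₀¹ r^{k-1} e^{-r²/(2ν)} dr`, and the substitution `t = r²/(2ν)` turns the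
radial integral into `(2ν)^{k/2}/2 · ∫₀^{1/(2ν)} t^{k/2-1} e^{-t} dt`; the ball volume and the
power of `2ν` cancel against the normalisation. Since the integrand is positive, this is
strictly increasing in the upper limit `1/(2ν)`, hence strictly decreasing in `ν`.
-/

open Real MeasureTheory

/-- `f_k(ν) := (1/V_{1,k})·(2πν)^{−k/2}·∫_{B_k} exp(−‖x‖²/(2ν)) dx`, the density at `0` of
`X + Z` for `X` uniform on the unit ball `B_k ⊆ ℝ^k` and `Z ~ N(0, ν I_k)` independent.
Here `V_{1,k} = π^{k/2}/Γ(k/2+1)` is the volume of the unit ball. -/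
noncomputable def densAtZero (k : ℕ) (ν : ℝ) : ℝ :=
  (1 / (Real.pi ^ ((k : ℝ) / 2) / Real.Gamma ((k : ℝ) / 2 + 1))) *
    (2 * Real.pi * ν) ^ (-(k : ℝ) / 2) *
    ∫ x in Metric.closedBall (0 : EuclideanSpace ℝ (Fin k)) 1,
      Real.exp (-‖x‖ ^ 2 / (2 * ν))

open Set Metric

theorem integral_rpow_mul_comp_sq_div {F : Type*} [NormedAddCommGroup F] [NormedSpace ℝ F]
    (g : ℝ → F) (p : ℝ) {c R : ℝ} (hc : 0 < c) (hR : 0 ≤ R) :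
    ∫ r in (0 : ℝ)..R, r ^ (2 * p - 1) • g (r ^ 2 / c) =
      (c ^ p / 2) • ∫ t in (0 : ℝ)..R ^ 2 / c, t ^ (p - 1) • g t := by
  have hmono : StrictMonoOn (fun r : ℝ ↦ r ^ 2 / c) (Icc 0 R) := fun a ha b hb hab ↦
    div_lt_div_of_pos_right (pow_left_strictMonoOn₀ two_ne_zero ha.1 hb.1 hab) hc
  have himage : (fun r : ℝ ↦ r ^ 2 / c) '' Ioo 0 R = Ioo 0 (R ^ 2 / c) := by
    rw [(by fun_prop : Continuous fun r : ℝ ↦ r ^ 2 / c).continuousOn.image_Ioo_of_strictMonoOn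
      hR hmono]
    simp
  rw [intervalIntegral.integral_of_le hR, intervalIntegral.integral_of_le (by positivity),
    integral_Ioc_eq_integral_Ioo, integral_Ioc_eq_integral_Ioo, ← himage,
    integral_image_eq_integral_abs_deriv_smul measurableSet_Ioo
      (fun r _ ↦ ((hasDerivAt_pow 2 r).div_const c).hasDerivWithinAt)
      (hmono.injOn.mono Ioo_subset_Icc_self),
    ← integral_smul]
  refine setIntegral_congr_fun measurableSet_Ioo fun r hr ↦ ?_
  have hr0 : 0 < r := hr.1
  rw [smul_smul, smul_smul]
  congr 1
  rw [abs_of_pos (by positivity), div_rpow (by positivity) hc.le, ← rpow_natCast_mul hr0.le,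
    rpow_sub_one hc.ne', show 2 * p - 1 = (2 : ℕ) * (p - 1) + 1 by push_cast; ring,
    rpow_add_one hr0.ne']
  field_simp
  ring

theorem intervalIntegrable_rpow_mul_exp_neg {s : ℝ} (hs : -1 < s) (a b : ℝ) :
    IntervalIntegrable (fun t ↦ t ^ s * exp (-t)) volume a b :=
  (intervalIntegral.intervalIntegrable_rpow' hs).mul_continuousOn (by fun_prop)

theorem strictMonoOn_integral_of_pos {g : ℝ → ℝ} {a : ℝ}
    (hg : ∀ b, IntervalIntegrable g volume a b) (hpos : ∀ t ∈ Ioi a, 0 < g t) :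
    StrictMonoOn (fun b ↦ ∫ t in a..b, g t) (Ici a) := by
  intro b hb c _ hbc
  have hbc_int : IntervalIntegrable g volume b c := (hg b).symm.trans (hg c)
  dsimp only
  rw [← intervalIntegral.integral_add_adjacent_intervals (hg b) hbc_int, lt_add_iff_pos_right]
  exact intervalIntegral.intervalIntegral_pos_of_pos_on hbc_int
    (fun t ht ↦ hpos t (lt_of_le_of_lt hb ht.1)) hbc

section
variable {E F : Type*} [NormedAddCommGroup E] [NormedSpace ℝ E] [Nontrivial E] [MeasurableSpace E]
  [BorelSpace E] [FiniteDimensional ℝ E] (μ : Measure E) [μ.IsAddHaarMeasure]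
  [NormedAddCommGroup F] [NormedSpace ℝ F]

theorem setIntegral_closedBall_fun_norm_addHaar (f : ℝ → F) {R : ℝ} (hR : 0 ≤ R) :
    ∫ x in closedBall (0 : E) R, f ‖x‖ ∂μ =
      Module.finrank ℝ E • μ.real (ball 0 1) •
        ∫ r in (0 : ℝ)..R, r ^ (Module.finrank ℝ E - 1) • f r := by
  have hind : (closedBall (0 : E) R).indicator (fun x ↦ f ‖x‖) =
      fun x ↦ (Iic R).indicator f ‖x‖ := by
    ext x
    simp only [indicator, mem_closedBall_zero_iff, mem_Iic]
  rw [← integral_indicator measurableSet_closedBall, hind, integral_fun_norm_addHaar,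
    intervalIntegral.integral_of_le hR, ← Ioi_inter_Iic, ← setIntegral_indicator measurableSet_Iic]
  simp_rw [indicator_smul_apply]

theorem setIntegral_closedBall_exp_neg_norm_sq_div {ν : ℝ} (hν : 0 < ν) :
    ∫ x in closedBall (0 : E) 1, exp (-‖x‖ ^ 2 / (2 * ν)) ∂μ =
      (Module.finrank ℝ E : ℝ) / 2 * μ.real (ball 0 1) * (2 * ν) ^ ((Module.finrank ℝ E : ℝ) / 2) *
        ∫ t in (0 : ℝ)..1 / (2 * ν), t ^ ((Module.finrank ℝ E : ℝ) / 2 - 1) * exp (-t) := by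
  set n := Module.finrank ℝ E
  have hn : 0 < n := Module.finrank_pos
  have hradial : ∫ r in (0 : ℝ)..1, r ^ (n - 1) • exp (-r ^ 2 / (2 * ν)) =
      ∫ r in (0 : ℝ)..1, r ^ (2 * ((n : ℝ) / 2) - 1) • (fun t ↦ exp (-t)) (r ^ 2 / (2 * ν)) := by
    refine intervalIntegral.integral_congr fun r _ ↦ ?_
    rw [← rpow_natCast, Nat.cast_sub hn, neg_div]
    ring_nf
  rw [setIntegral_closedBall_fun_norm_addHaar μ (fun r ↦ exp (-r ^ 2 / (2 * ν))) zero_le_one,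
    hradial, integral_rpow_mul_comp_sq_div (fun t ↦ exp (-t)) _ (by positivity) zero_le_one,
    one_pow]
  simp only [nsmul_eq_mul, smul_eq_mul]
  ring

end

theorem InnerProductSpace.volume_real_ball_zero_one {E : Type*} [NormedAddCommGroup E]
    [InnerProductSpace ℝ E] [FiniteDimensional ℝ E] [MeasurableSpace E] [BorelSpace E]
    [Nontrivial E] :
    volume.real (ball (0 : E) 1) =
      π ^ ((Module.finrank ℝ E : ℝ) / 2) / Gamma ((Module.finrank ℝ E : ℝ) / 2 + 1) := by
  rw [measureReal_def, InnerProductSpace.volume_ball, ENNReal.ofReal_one, one_pow, one_mul,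
    ENNReal.toReal_ofReal (by positivity), sqrt_eq_rpow, ← rpow_mul_natCast pi_pos.le]
  ring_nf

theorem densAtZero_eq (k : ℕ) (hk : 0 < k) {ν : ℝ} (hν : 0 < ν) :
    densAtZero k ν =
      ((k : ℝ) / (2 * π ^ ((k : ℝ) / 2))) *
        ∫ t in (0:ℝ)..(1 / (2 * ν)), t ^ ((k : ℝ) / 2 - 1) * exp (-t) := by
  have : Nonempty (Fin k) := ⟨⟨0, hk⟩⟩
  have hsplit : (2 * π * ν) ^ (-(k : ℝ) / 2) =
      (π ^ ((k : ℝ) / 2))⁻¹ * ((2 * ν) ^ ((k : ℝ) / 2))⁻¹ := by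
    rw [neg_div, rpow_neg (by positivity), mul_right_comm, mul_rpow (by positivity) pi_pos.le,
      mul_inv, mul_comm]
  rw [densAtZero, setIntegral_closedBall_exp_neg_norm_sq_div volume hν,
    InnerProductSpace.volume_real_ball_zero_one, finrank_euclideanSpace_fin, hsplit]
  field_simp

/-- `f_k(ν) = (k/(2π^{k/2}))·∫₀^{1/(2ν)} t^{k/2−1} e^{−t} dt`, and consequently `f_k` is
strictly decreasing in `ν`: if `0 < ν_R < ν_P` then `f_k(ν_R) > f_k(ν_P)`. -/
theorem densAtZero_eq_and_strictAnti (k : ℕ) (hk : 0 < k) :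
    (∀ ν : ℝ, 0 < ν →
      densAtZero k ν =
        ((k : ℝ) / (2 * Real.pi ^ ((k : ℝ) / 2))) *
          ∫ t in (0:ℝ)..(1 / (2 * ν)), t ^ ((k : ℝ) / 2 - 1) * Real.exp (-t)) ∧
    (∀ νR νP : ℝ, 0 < νR → νR < νP → densAtZero k νR > densAtZero k νP) := by
  refine ⟨fun ν hν ↦ densAtZero_eq k hk hν, fun νR νP hR hRP ↦ ?_⟩
  have hP : 0 < νP := hR.trans hRP
  have hk' : (0 : ℝ) < k := Nat.cast_pos.mpr hk
  have hmono := strictMonoOn_integral_of_pos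
    (intervalIntegrable_rpow_mul_exp_neg (s := (k : ℝ) / 2 - 1) (by linarith) 0)
    (fun t ht ↦ mul_pos (rpow_pos_of_pos ht _) (exp_pos _))
  rw [gt_iff_lt, densAtZero_eq k hk hR, densAtZero_eq k hk hP]
  exact mul_lt_mul_of_pos_left
    (hmono (by positivity : 0 ≤ 1 / (2 * νP)) (by positivity : 0 ≤ 1 / (2 * νR))
      (one_div_lt_one_div_of_lt (by positivity) (by linarith)))
    (by positivity)
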